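/- arXiv:2203.13417 — 2 statements merged into one kernel-verified Lean document; each statement's English description precedes it below -/
import Mathlib

section
/- The amortized sliced Wasserstein loss does not satisfy the identity of indiscernibles: there exist a probability measure μ on ℝ^d (d ≥ 1) and a choice of amortized family such that A-SW(μ,μ) > 0. Concretely, for μ = (1/2)δ_{x_1} + (1/2)δ_{x_2} with x_1 ≠ x_2 and m = 2, taking the family to contain the constant function f(X,Y) = (x_1+x_2)/‖x_1+x_2‖ (assuming x_1 + x_2 ≠ 0 and ⟨x_1+x_2, x_1⟩ ≠ ⟨x_1+x_2, x_2⟩), one has A-SW(μ,μ) > 0. -/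
open MeasureTheory ENNReal

noncomputable section

abbrev Rd (d : ℕ) := EuclideanSpace ℝ (Fin d)

/-- Wasserstein-p distance defined via infimum over couplings. -/
def Wp {E : Type*} [MeasurableSpace E] [EDist E] (p : ℝ) (μ ν : Measure E) : ℝ≥0∞ :=
  ⨅ (π : Measure (E × E)) (_ : π.map Prod.fst = μ ∧ π.map Prod.snd = ν),
    (∫⁻ q, edist q.1 q.2 ^ p ∂π) ^ (1 / p)

/-- Empirical measure of an `m`-sample in `ℝ^d`. -/
def emp {d m : ℕ} (X : Fin m → Rd d) : Measure (Rd d) :=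
  (m : ℝ≥0∞)⁻¹ • ∑ i, Measure.dirac (X i)

/-- Pushforward of a measure on `ℝ^d` by the projection `x ↦ ⟨θ, x⟩`. -/
def proj {d : ℕ} (θ : Rd d) (μ : Measure (Rd d)) : Measure ℝ :=
  μ.map (fun x => inner (𝕜 := ℝ) θ x)

/-- The mini-batch measure `μ^{⊗m} ⊗ ν^{⊗m}`. -/
def mb {d : ℕ} (m : ℕ) (μ ν : Measure (Rd d)) :
    Measure ((Fin m → Rd d) × (Fin m → Rd d)) :=
  (Measure.pi fun _ => μ).prod (Measure.pi fun _ => ν)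

/-- Amortized sliced Wasserstein loss for a family of amortized models indexed by `Ψ`. -/
def ASW {d : ℕ} (p : ℝ) (m : ℕ) {Ψ : Type*}
    (f : Ψ → (Fin m → Rd d) → (Fin m → Rd d) → Rd d)
    (μ ν : Measure (Rd d)) : ℝ≥0∞ :=
  ⨆ ψ, ∫⁻ XY, Wp p (proj (f ψ XY.1 XY.2) (emp XY.1)) (proj (f ψ XY.1 XY.2) (emp XY.2))
    ∂(mb m μ ν)

/-- Mini-batch max-sliced Wasserstein loss. -/
def mMaxSW {d : ℕ} (p : ℝ) (m : ℕ) (μ ν : Measure (Rd d)) : ℝ≥0∞ :=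
  ∫⁻ XY, ⨆ θ : Metric.sphere (0 : Rd d) 1,
    Wp p (proj (θ : Rd d) (emp XY.1)) (proj (θ : Rd d) (emp XY.2)) ∂(mb m μ ν)

/-- Max-sliced Wasserstein distance. -/
def MaxSW {d : ℕ} (p : ℝ) (μ ν : Measure (Rd d)) : ℝ≥0∞ :=
  ⨆ θ : Metric.sphere (0 : Rd d) 1, Wp p (proj (θ : Rd d) μ) (proj (θ : Rd d) ν)

/-- Finite p-th moment. -/
def FiniteMoment {E : Type*} [MeasurableSpace E] [NNNorm E] (p : ℝ) (μ : Measure E) : Prop :=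
  ∫⁻ x, (‖x‖₊ : ℝ≥0∞) ^ p ∂μ ≠ ∞

section Wasserstein

variable {E : Type*} [MeasurableSpace E]

/-- The only coupling of two Dirac masses is the Dirac mass at the pair. -/
lemma Wp_dirac_dirac [EDist E] [MeasurableSingletonClass E] (p : ℝ) (a b : E) :
    Wp p (Measure.dirac a) (Measure.dirac b) = (edist a b ^ p) ^ (1 / p) := by
  refine le_antisymm ?_ (le_iInf₂ fun π hπ => ?_)
  · refine (iInf₂_le (Measure.dirac (a, b)) ⟨?_, ?_⟩).trans_eq ?_
    · rw [lintegral_dirac]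
    · exact Measure.map_dirac' measurable_fst _
    · exact Measure.map_dirac' measurable_snd _
  obtain ⟨hfst, hsnd⟩ := hπ
  have hfst_ae : ∀ᵐ q ∂π, q.1 = a :=
    ae_of_ae_map measurable_fst.aemeasurable (p := (· = a)) (by rw [hfst, ae_dirac_eq]; rfl)
  have hsnd_ae : ∀ᵐ q ∂π, q.2 = b :=
    ae_of_ae_map measurable_snd.aemeasurable (p := (· = b)) (by rw [hsnd, ae_dirac_eq]; rfl)
  have hπ_univ : π Set.univ = 1 := by
    simpa [hfst] using (Measure.map_apply (μ := π) measurable_fst MeasurableSet.univ).symm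
  have hconst : ∀ᵐ q ∂π, edist q.1 q.2 ^ p = edist a b ^ p := by
    filter_upwards [hfst_ae, hsnd_ae] with q hq₁ hq₂
    rw [hq₁, hq₂]
  rw [lintegral_congr_ae hconst, lintegral_const, hπ_univ, mul_one]

lemma Wp_dirac_dirac_pos [MetricSpace E] [MeasurableSingletonClass E] (p : ℝ) {a b : E}
    (hab : a ≠ b) : 0 < Wp p (Measure.dirac a) (Measure.dirac b) := by
  rw [Wp_dirac_dirac]
  exact ENNReal.rpow_pos (ENNReal.rpow_pos (edist_pos.mpr hab) (edist_ne_top a b))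
    (ENNReal.rpow_ne_top_of_nonneg' (edist_pos.mpr hab) (edist_ne_top a b))

end Wasserstein

lemma emp_const {d m : ℕ} [NeZero m] (x : Rd d) : emp (fun _ : Fin m => x) = Measure.dirac x := by
  rw [emp, Finset.sum_const, Finset.card_univ, Fintype.card_fin, ← Nat.cast_smul_eq_nsmul ℝ≥0∞,
    smul_smul, ENNReal.inv_mul_cancel (NeZero.ne _) (ENNReal.natCast_ne_top m), one_smul]

lemma proj_dirac {d : ℕ} (θ x : Rd d) :
    proj θ (Measure.dirac x) = Measure.dirac (inner ℝ θ x) :=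
  Measure.map_dirac' (measurable_const.inner measurable_id) x

lemma mb_singleton_const {d m : ℕ} (μ ν : Measure (Rd d)) [SigmaFinite μ] [SigmaFinite ν]
    (x y : Rd d) :
    mb m μ ν {((fun _ => x), (fun _ => y))} = μ {x} ^ m * ν {y} ^ m := by
  rw [← Set.singleton_prod_singleton, mb, Measure.prod_prod, ← Set.univ_pi_singleton,
    ← Set.univ_pi_singleton, Measure.pi_pi, Measure.pi_pi]
  simp only [Finset.prod_const, Finset.card_univ, Fintype.card_fin]

lemma lintegral_pos_of_atom {α : Type*} [MeasurableSpace α] [MeasurableSingletonClass α]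
    {μ : Measure α} {f : α → ℝ≥0∞} (a : α) (hf : 0 < f a) (hμ : 0 < μ {a}) :
    0 < ∫⁻ x, f x ∂μ :=
  calc 0 < f a * μ {a} := ENNReal.mul_pos hf.ne' hμ.ne'
    _ = ∫⁻ x in {a}, f x ∂μ := (lintegral_singleton f a).symm
    _ ≤ ∫⁻ x, f x ∂μ := setLIntegral_le_lintegral _ _

lemma inner_inv_norm_smul_ne_of_ne {d : ℕ} {v x y : Rd d} (h : inner ℝ v x ≠ inner ℝ v y) :
    inner ℝ (‖v‖⁻¹ • v) x ≠ inner ℝ (‖v‖⁻¹ • v) y := by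
  have hv : v ≠ 0 := by rintro rfl; simp at h
  rw [real_inner_smul_left, real_inner_smul_left]
  exact fun h' => h (mul_left_cancel₀ (inv_ne_zero (norm_ne_zero_iff.mpr hv)) h')

theorem asw_not_identity_general {d : ℕ} (p : ℝ)
    (x₁ x₂ : Rd d)
    (hproj : (inner (𝕜 := ℝ) (x₁ + x₂) x₁ : ℝ) ≠ (inner (𝕜 := ℝ) (x₁ + x₂) x₂ : ℝ)) :
    0 < ASW p 2 (fun (_ : Unit) (_ _ : Fin 2 → Rd d) => ‖x₁ + x₂‖⁻¹ • (x₁ + x₂))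
      ((2 : ℝ≥0∞)⁻¹ • Measure.dirac x₁ + (2 : ℝ≥0∞)⁻¹ • Measure.dirac x₂)
      ((2 : ℝ≥0∞)⁻¹ • Measure.dirac x₁ + (2 : ℝ≥0∞)⁻¹ • Measure.dirac x₂) := by
  set μ : Measure (Rd d) := (2 : ℝ≥0∞)⁻¹ • Measure.dirac x₁ + (2 : ℝ≥0∞)⁻¹ • Measure.dirac x₂
  have : IsFiniteMeasure μ := ⟨by simp [μ]⟩
  have hx₁ : μ {x₁} ≠ 0 := by simp [μ]
  have hx₂ : μ {x₂} ≠ 0 := by simp [μ]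
  -- The batches `X = (x₁, x₁)` and `Y = (x₂, x₂)` have positive probability and project to distinct atoms.
  refine lt_of_lt_of_le ?_ (le_iSup _ ())
  refine lintegral_pos_of_atom ((fun _ => x₁), (fun _ => x₂)) ?_ ?_
  · simp only [emp_const, proj_dirac]
    exact Wp_dirac_dirac_pos p (inner_inv_norm_smul_ne_of_ne hproj)
  · rw [mb_singleton_const]
    exact ENNReal.mul_pos (pow_ne_zero 2 hx₁) (pow_ne_zero 2 hx₂)

theorem asw_not_identity {d : ℕ} (p : ℝ) (hp : 1 ≤ p) (hd : 1 ≤ d)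
    (x₁ x₂ : Rd d) (hne : x₁ ≠ x₂) (hsum : x₁ + x₂ ≠ 0)
    (hproj : (inner (𝕜 := ℝ) (x₁ + x₂) x₁ : ℝ) ≠ (inner (𝕜 := ℝ) (x₁ + x₂) x₂ : ℝ)) :
    0 < ASW p 2 (fun (_ : Unit) (_ _ : Fin 2 → Rd d) => ‖x₁ + x₂‖⁻¹ • (x₁ + x₂))
      ((2 : ℝ≥0∞)⁻¹ • Measure.dirac x₁ + (2 : ℝ≥0∞)⁻¹ • Measure.dirac x₂)
      ((2 : ℝ≥0∞)⁻¹ • Measure.dirac x₁ + (2 : ℝ≥0∞)⁻¹ • Measure.dirac x₂) :=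
  asw_not_identity_general p x₁ x₂ hproj
end
end

section
/- For probability measures μ, ν on ℝ with finite p-th moments (p ≥ 1), the Wasserstein-p distance admits the closed form W_p(μ,ν) = (∫_0^1 |F_μ^{-1}(z) − F_ν^{-1}(z)|^p dz)^{1/p}, where F_μ^{-1} is the quantile function (generalized inverse of the CDF) of μ. -/
/-!
The quantile coupling, the law of `z ↦ (F_μ⁻¹ z, F_ν⁻¹ z)` under the uniform measure on `(0, 1)`,
has marginals `μ` and `ν` because `F⁻¹ z ≤ s ↔ z ≤ F s` for `z ∈ (0, 1)`; it attains the right-hand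
side. For optimality, write `|u| ^ p` as a mixture `∫ ((u - t)₊ + (-u - t)₊) dm(t)` of hinge
functions (`m = δ₀` for `p = 1`, `m` with density `p (p - 1) t ^ (p - 2)` on `(0, ∞)` for `p > 1`).
For one hinge, `∫ (X - Y - t)₊ = ∫ P(Y ≤ r, r + t < X) dr`, and the Fréchet bound
`P(Y ≤ r, r + t < X) ≥ F_ν r - F_μ (r + t)` holds for every coupling, with equality for the
quantile coupling.
-/

open MeasureTheory ENNReal

noncomputable section

/-- Cumulative distribution function. -/
def cdf' (μ : Measure ℝ) (t : ℝ) : ℝ := (μ (Set.Iic t)).toReal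

/-- Quantile function (generalized inverse of the CDF). -/
def quantile (μ : Measure ℝ) (z : ℝ) : ℝ := sInf {t : ℝ | z ≤ cdf' μ t}

open ProbabilityTheory Set

section Quantile

variable {μ : Measure ℝ}

lemma nonempty_setOf_le_cdf {z : ℝ} (hz : z < 1) : {t | z ≤ cdf μ t}.Nonempty :=
  ((tendsto_cdf_atTop μ).eventually (eventually_ge_nhds hz)).exists

lemma bddBelow_setOf_le_cdf {z : ℝ} (hz : 0 < z) : BddBelow {t | z ≤ cdf μ t} := by
  obtain ⟨t₀, ht₀⟩ := ((tendsto_cdf_atBot μ).eventually (eventually_lt_nhds hz)).exists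
  exact ⟨t₀, fun t ht => le_of_not_gt fun htt₀ =>
    (ht.trans (monotone_cdf μ htt₀.le)).not_gt ht₀⟩

variable [IsProbabilityMeasure μ]

lemma quantile_eq_sInf (z : ℝ) : quantile μ z = sInf {t | z ≤ cdf μ t} := by
  simp only [quantile, cdf', cdf_eq_real, measureReal_def]

lemma le_cdf_quantile {z : ℝ} (hz : z ∈ Ioo (0 : ℝ) 1) : z ≤ cdf μ (quantile μ z) := by
  rw [quantile_eq_sInf]
  refine ge_of_tendsto ((cdf μ).right_continuous _ |>.mono Ioi_subset_Ici_self) ?_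
  filter_upwards [self_mem_nhdsWithin] with t ht
  obtain ⟨s, hs, hst⟩ := exists_lt_of_csInf_lt (nonempty_setOf_le_cdf hz.2) ht
  exact hs.trans (monotone_cdf μ hst.le)

lemma quantile_le_iff {z s : ℝ} (hz : z ∈ Ioo (0 : ℝ) 1) :
    quantile μ z ≤ s ↔ z ≤ cdf μ s :=
  ⟨fun h => (le_cdf_quantile hz).trans (monotone_cdf μ h),
    fun h => (quantile_eq_sInf z).trans_le (csInf_le (bddBelow_setOf_le_cdf hz.1) h)⟩

lemma quantile_eq_zero_of_notMem_Ioc {z : ℝ} (hz : z ∉ Ioc (0 : ℝ) 1) : quantile μ z = 0 := by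
  rw [quantile_eq_sInf]
  rcases not_and_or.1 hz with hz | hz
  · refine Real.sInf_of_not_bddBelow fun ⟨b, hb⟩ => ?_
    have : b - 1 ∈ {t | z ≤ cdf μ t} := (not_lt.1 hz).trans (cdf_nonneg μ _)
    linarith [hb this]
  · convert Real.sInf_empty
    exact eq_empty_of_forall_notMem fun t ht => (lt_of_not_ge hz).not_ge (ht.trans (cdf_le_one μ t))

lemma monotoneOn_quantile : MonotoneOn (quantile μ) (Ioo 0 1) := fun _ hz _ hz' hzz' =>
  (quantile_le_iff hz).2 (hzz'.trans (le_cdf_quantile hz'))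

lemma measurable_quantile : Measurable (quantile μ) := by
  refine measurable_of_restrict_of_restrict_compl measurableSet_Ioo
    (monotoneOn_iff_monotone.1 monotoneOn_quantile).measurable ?_
  have hcompl : (Ioo (0 : ℝ) 1)ᶜ.domRestrict (quantile μ)
      = fun z : ↥(Ioo (0 : ℝ) 1)ᶜ => ({1} : Set ℝ).indicator (fun _ => quantile μ 1) z := by
    funext ⟨z, hz⟩
    by_cases h1 : z = 1
    · simp [h1]
    · have : z ∉ Ioc (0 : ℝ) 1 := fun h => hz ⟨h.1, lt_of_le_of_ne h.2 h1⟩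
      simp [h1, quantile_eq_zero_of_notMem_Ioc this]
  rw [hcompl]
  exact (measurable_const.indicator (measurableSet_singleton 1)).comp measurable_subtype_coe

end Quantile

section Tonelli

variable {Ω : Type*} [MeasurableSpace Ω] {ρ : Measure Ω} {X Y : Ω → ℝ}

lemma lintegral_ofReal_sub_eq_lintegral_measure [SFinite ρ] (hX : Measurable X)
    (hY : Measurable Y) :
    ∫⁻ ω, ENNReal.ofReal (X ω - Y ω) ∂ρ = ∫⁻ r, ρ {ω | Y ω ≤ r ∧ r < X ω} := by
  have hS : MeasurableSet {q : Ω × ℝ | Y q.1 ≤ q.2 ∧ q.2 < X q.1} :=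
    (measurableSet_le (hY.comp measurable_fst) measurable_snd).inter
      (measurableSet_lt measurable_snd (hX.comp measurable_fst))
  calc ∫⁻ ω, ENNReal.ofReal (X ω - Y ω) ∂ρ = ∫⁻ ω, volume (Ico (Y ω) (X ω)) ∂ρ := by
        simp_rw [Real.volume_Ico]
    _ = ρ.prod volume {q : Ω × ℝ | Y q.1 ≤ q.2 ∧ q.2 < X q.1} := (Measure.prod_apply hS).symm
    _ = ∫⁻ r, ρ {ω | Y ω ≤ r ∧ r < X ω} := Measure.prod_apply_symm hS

lemma lintegral_lintegral_hinge_swap [SFinite ρ] (m : Measure ℝ) [SFinite m] (hX : Measurable X)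
    (hY : Measurable Y) :
    ∫⁻ ω, ∫⁻ t, ENNReal.ofReal (X ω - Y ω - t) + ENNReal.ofReal (Y ω - X ω - t) ∂m ∂ρ
      = ∫⁻ t, (∫⁻ ω, ENNReal.ofReal (X ω - Y ω - t) ∂ρ)
          + ∫⁻ ω, ENNReal.ofReal (Y ω - X ω - t) ∂ρ ∂m := by
  rw [lintegral_lintegral_swap (by fun_prop)]
  exact lintegral_congr fun t => lintegral_add_left (by fun_prop) _

end Tonelli

section Comonotone

variable {μ ν : Measure ℝ} [IsProbabilityMeasure μ] [IsProbabilityMeasure ν]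

lemma volume_Ioo_inter_Ioc {a b : ℝ} (ha : 0 ≤ a) (hb : b ≤ 1) :
    volume (Ioo (0 : ℝ) 1 ∩ Ioc a b) = ENNReal.ofReal (b - a) := by
  refine le_antisymm ((measure_mono inter_subset_right).trans Real.volume_Ioc.le) ?_
  rw [← Real.volume_Ioo]
  exact measure_mono fun z hz => ⟨⟨ha.trans_lt hz.1, hz.2.trans_le hb⟩, hz.1, hz.2.le⟩

lemma map_quantile : (volume.restrict (Ioo (0 : ℝ) 1)).map (quantile μ) = μ := by
  have : IsProbabilityMeasure (volume.restrict (Ioo (0 : ℝ) 1)) := ⟨by simp⟩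
  have : IsProbabilityMeasure ((volume.restrict (Ioo (0 : ℝ) 1)).map (quantile μ)) :=
    Measure.isProbabilityMeasure_map measurable_quantile.aemeasurable
  refine Measure.ext_of_Iic _ _ fun s => ?_
  have hset : quantile μ ⁻¹' Iic s ∩ Ioo 0 1 = Ioo 0 1 ∩ Ioc 0 (cdf μ s) := by
    ext z
    simp only [mem_inter_iff, mem_preimage, mem_Iic, mem_Ioc]
    exact ⟨fun h => ⟨h.2, h.2.1, (quantile_le_iff h.2).1 h.1⟩,
      fun h => ⟨(quantile_le_iff h.1).2 h.2.2, h.1⟩⟩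
  rw [Measure.map_apply measurable_quantile measurableSet_Iic,
    Measure.restrict_apply (measurable_quantile measurableSet_Iic), hset,
    volume_Ioo_inter_Ioc le_rfl (cdf_le_one μ s), sub_zero, ofReal_cdf]

lemma restrict_Ioo_quantile_le_lt (r s : ℝ) :
    volume.restrict (Ioo (0 : ℝ) 1) {z | quantile ν z ≤ r ∧ s < quantile μ z}
      = ENNReal.ofReal (cdf ν r - cdf μ s) := by
  have hset : {z | quantile ν z ≤ r ∧ s < quantile μ z} ∩ Ioo 0 1
      = Ioo 0 1 ∩ Ioc (cdf μ s) (cdf ν r) := by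
    ext z
    simp only [mem_inter_iff, mem_Ioc]
    constructor
    · rintro ⟨⟨hν, hμ⟩, hz⟩
      exact ⟨hz, not_le.1 fun h => hμ.not_ge ((quantile_le_iff hz).2 h),
        (quantile_le_iff hz).1 hν⟩
    · rintro ⟨hz, hμ, hν⟩
      exact ⟨⟨(quantile_le_iff hz).2 hν, not_le.1 fun h => hμ.not_ge ((quantile_le_iff hz).1 h)⟩,
        hz⟩
  have hm : MeasurableSet {z | quantile ν z ≤ r ∧ s < quantile μ z} :=
    (measurableSet_le measurable_quantile measurable_const).inter
      (measurableSet_lt measurable_const measurable_quantile)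
  rw [Measure.restrict_apply hm, hset,
    volume_Ioo_inter_Ioc (cdf_nonneg μ s) (cdf_le_one ν r)]

variable {Ω : Type*} [MeasurableSpace Ω] {ρ : Measure Ω} {X Y : Ω → ℝ}

lemma ofReal_cdf_sub_le_measure (hX : Measurable X) (hY : Measurable Y) (hXμ : ρ.map X = μ)
    (hYν : ρ.map Y = ν) (r s : ℝ) :
    ENNReal.ofReal (cdf ν r - cdf μ s) ≤ ρ {ω | Y ω ≤ r ∧ s < X ω} := by
  rw [ENNReal.ofReal_sub _ (cdf_nonneg μ s), tsub_le_iff_right, ofReal_cdf, ofReal_cdf, ← hXμ,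
    ← hYν, Measure.map_apply hY measurableSet_Iic, Measure.map_apply hX measurableSet_Iic]
  calc ρ (Y ⁻¹' Iic r) ≤ ρ ({ω | Y ω ≤ r ∧ s < X ω} ∪ X ⁻¹' Iic s) :=
        measure_mono fun ω hω => (lt_or_ge s (X ω)).imp (fun h => ⟨hω, h⟩) id
    _ ≤ _ := measure_union_le _ _

lemma lintegral_quantile_sub_sub_le [SFinite ρ] (hX : Measurable X) (hY : Measurable Y)
    (hXμ : ρ.map X = μ) (hYν : ρ.map Y = ν) (t : ℝ) :
    ∫⁻ z in Ioo (0 : ℝ) 1, ENNReal.ofReal (quantile μ z - quantile ν z - t)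
      ≤ ∫⁻ ω, ENNReal.ofReal (X ω - Y ω - t) ∂ρ := by
  simp_rw [sub_right_comm _ _ t]
  rw [lintegral_ofReal_sub_eq_lintegral_measure (measurable_quantile.sub_const t)
      measurable_quantile, lintegral_ofReal_sub_eq_lintegral_measure (hX.sub_const t) hY]
  refine lintegral_mono fun r => ?_
  simp_rw [lt_sub_iff_add_lt]
  rw [restrict_Ioo_quantile_le_lt]
  exact ofReal_cdf_sub_le_measure hX hY hXμ hYν r (r + t)

end Comonotone

section Hinge

variable {p : ℝ}

lemma integral_rpow_mul_sub (hp : 1 < p) {a : ℝ} (ha : 0 ≤ a) :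
    ∫ t in (0 : ℝ)..a, p * (p - 1) * t ^ (p - 2) * (a - t) = a ^ p := by
  have hderiv : ∀ t ∈ Ioo 0 a, HasDerivAt (fun t => p * a * t ^ (p - 1) - (p - 1) * t ^ p)
      (p * (p - 1) * t ^ (p - 2) * (a - t)) t := by
    intro t ht
    have hsucc : t ^ (p - 1) = t ^ (p - 2) * t := by
      rw [← Real.rpow_add_one ht.1.ne']; ring_nf
    refine (((Real.hasDerivAt_rpow_const (p := p - 1) (Or.inl ht.1.ne')).const_mul (p * a)).sub
      ((Real.hasDerivAt_rpow_const (p := p) (Or.inl ht.1.ne')).const_mul (p - 1))).congr_deriv ?_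
    rw [show p - 1 - 1 = p - 2 by ring, hsucc]
    ring
  have hcont : ContinuousOn (fun t => p * a * t ^ (p - 1) - (p - 1) * t ^ p) (Icc 0 a) :=
    (((Real.continuous_rpow_const (by linarith)).const_mul _).sub
      ((Real.continuous_rpow_const (by linarith)).const_mul _)).continuousOn
  have hint : IntervalIntegrable (fun t => p * (p - 1) * t ^ (p - 2) * (a - t)) volume 0 a :=
    ((intervalIntegral.intervalIntegrable_rpow' (by linarith)).const_mul _).mul_continuousOn
      (continuous_const.sub continuous_id).continuousOn
  have hpow : a ^ p = a * a ^ (p - 1) := by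
    rw [← Real.rpow_one_add' ha (by linarith)]; ring_nf
  rw [intervalIntegral.integral_eq_sub_of_hasDerivAt_of_le ha hcont hderiv hint,
    Real.zero_rpow (by linarith), Real.zero_rpow (by linarith), hpow]
  ring

lemma lintegral_Ioi_rpow_mul_sub (hp : 1 < p) {a : ℝ} (ha : 0 ≤ a) :
    ∫⁻ t in Ioi 0, ENNReal.ofReal (p * (p - 1) * t ^ (p - 2)) * ENNReal.ofReal (a - t)
      = ENNReal.ofReal (a ^ p) := by
  have hc : ∀ t ∈ Ioi (0 : ℝ), 0 ≤ p * (p - 1) * t ^ (p - 2) := fun t ht =>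
    mul_nonneg (by nlinarith) (Real.rpow_nonneg ht.le _)
  have hvanish : ∫⁻ t in Ioi a,
      ENNReal.ofReal (p * (p - 1) * t ^ (p - 2)) * ENNReal.ofReal (a - t) = 0 :=
    (setLIntegral_congr_fun measurableSet_Ioi fun t ht => by
      rw [ENNReal.ofReal_eq_zero.2 (sub_nonpos.2 ht.le), mul_zero]).trans lintegral_zero
  rw [← Ioc_union_Ioi_eq_Ioi ha, lintegral_union measurableSet_Ioi (Ioc_disjoint_Ioi le_rfl),
    hvanish, add_zero, ← integral_rpow_mul_sub hp ha, intervalIntegral.integral_of_le ha,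
    ofReal_integral_eq_lintegral_ofReal]
  · exact setLIntegral_congr_fun measurableSet_Ioc fun t ht =>
      (ENNReal.ofReal_mul (hc t ht.1)).symm
  · exact (intervalIntegrable_iff_integrableOn_Ioc_of_le ha).1
      (((intervalIntegral.intervalIntegrable_rpow' (by linarith)).const_mul _).mul_continuousOn
        (continuous_const.sub continuous_id).continuousOn)
  · filter_upwards [ae_restrict_mem measurableSet_Ioc] with t ht
    exact mul_nonneg (hc t ht.1) (sub_nonneg.2 ht.2)

lemma ofReal_sub_add_ofReal_neg_sub (u : ℝ) {t : ℝ} (ht : 0 ≤ t) :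
    ENNReal.ofReal (u - t) + ENNReal.ofReal (-u - t) = ENNReal.ofReal (|u| - t) := by
  rcases le_total 0 u with hu | hu
  · rw [ENNReal.ofReal_eq_zero.2 (by linarith : -u - t ≤ 0), add_zero, abs_of_nonneg hu]
  · rw [ENNReal.ofReal_eq_zero.2 (by linarith : u - t ≤ 0), zero_add, abs_of_nonpos hu]

lemma exists_ofReal_abs_rpow_eq_lintegral_hinge (hp : 1 ≤ p) :
    ∃ m : Measure ℝ, SFinite m ∧ ∀ u : ℝ,
      ENNReal.ofReal (|u| ^ p) = ∫⁻ t, ENNReal.ofReal (u - t) + ENNReal.ofReal (-u - t) ∂m := by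
  rcases hp.eq_or_lt with rfl | hp
  · refine ⟨Measure.dirac 0, inferInstance, fun u => ?_⟩
    rw [lintegral_dirac, ofReal_sub_add_ofReal_neg_sub u le_rfl, Real.rpow_one, sub_zero]
  · refine ⟨(volume.restrict (Ioi 0)).withDensity
      fun t => ENNReal.ofReal (p * (p - 1) * t ^ (p - 2)), inferInstance, fun u => ?_⟩
    rw [lintegral_withDensity_eq_lintegral_mul _ (by fun_prop) (by fun_prop),
      ← lintegral_Ioi_rpow_mul_sub hp (abs_nonneg u)]
    exact setLIntegral_congr_fun measurableSet_Ioi fun t ht => by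
      simp only [Pi.mul_apply, ofReal_sub_add_ofReal_neg_sub u ht.le]

end Hinge

section Coupling

variable {μ ν : Measure ℝ} [IsProbabilityMeasure μ] [IsProbabilityMeasure ν]
  {Ω : Type*} [MeasurableSpace Ω] {ρ : Measure Ω} [SFinite ρ] {X Y : Ω → ℝ}

lemma lintegral_abs_quantile_sub_rpow_le {p : ℝ} (hp : 1 ≤ p) (hX : Measurable X)
    (hY : Measurable Y) (hXμ : ρ.map X = μ) (hYν : ρ.map Y = ν) :
    ∫⁻ z in Ioo (0 : ℝ) 1, ENNReal.ofReal (|quantile μ z - quantile ν z| ^ p)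
      ≤ ∫⁻ ω, ENNReal.ofReal (|X ω - Y ω| ^ p) ∂ρ := by
  obtain ⟨m, hm, hcost⟩ := exists_ofReal_abs_rpow_eq_lintegral_hinge hp
  simp_rw [hcost, neg_sub]
  rw [lintegral_lintegral_hinge_swap m measurable_quantile measurable_quantile,
    lintegral_lintegral_hinge_swap m hX hY]
  exact lintegral_mono fun t => add_le_add (lintegral_quantile_sub_sub_le hX hY hXμ hYν t)
    (lintegral_quantile_sub_sub_le hY hX hYν hXμ t)

end Coupling

theorem wp_one_dim_closed_form_general (p : ℝ) (hp : 1 ≤ p) (μ ν : Measure ℝ)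
    [IsProbabilityMeasure μ] [IsProbabilityMeasure ν] :
    Wp p μ ν
      = (∫⁻ z in Set.Ioo (0 : ℝ) 1, ENNReal.ofReal (|quantile μ z - quantile ν z| ^ p)) ^ (1 / p) := by
  have hcost : ∀ π : Measure (ℝ × ℝ),
      ∫⁻ q, edist q.1 q.2 ^ p ∂π = ∫⁻ q, ENNReal.ofReal (|q.1 - q.2| ^ p) ∂π := fun π =>
    lintegral_congr fun q => by
      rw [edist_dist, Real.dist_eq, ENNReal.ofReal_rpow_of_nonneg (abs_nonneg _) (by linarith)]
  have hQ : Measurable fun z => (quantile μ z, quantile ν z) :=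
    measurable_quantile.prodMk measurable_quantile
  refine le_antisymm ?_ ?_
  · refine iInf₂_le_of_le ((volume.restrict (Ioo 0 1)).map fun z => (quantile μ z, quantile ν z))
      ⟨?_, ?_⟩ ?_
    · rw [Measure.map_map measurable_fst hQ]
      exact map_quantile
    · rw [Measure.map_map measurable_snd hQ]
      exact map_quantile
    · rw [hcost, lintegral_map (by fun_prop) hQ]
  · refine le_iInf₂ fun π ⟨hfst, hsnd⟩ => ?_
    have : IsProbabilityMeasure (π.map Prod.fst) := hfst ▸ inferInstance
    have := Measure.isProbabilityMeasure_of_map (μ := π) Prod.fst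
    rw [hcost]
    exact ENNReal.rpow_le_rpow
      (lintegral_abs_quantile_sub_rpow_le hp measurable_fst measurable_snd hfst hsnd)
      (by positivity)

theorem wp_one_dim_closed_form (p : ℝ) (hp : 1 ≤ p) (μ ν : Measure ℝ)
    [IsProbabilityMeasure μ] [IsProbabilityMeasure ν]
    (hμ : FiniteMoment p μ) (hν : FiniteMoment p ν) :
    Wp p μ ν
      = (∫⁻ z in Set.Ioo (0 : ℝ) 1, ENNReal.ofReal (|quantile μ z - quantile ν z| ^ p)) ^ (1 / p) :=
  wp_one_dim_closed_form_general p hp μ ν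
end
end
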